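/- In the dual coordinates of so(5), define C₂ = u₊u₋ + u₃² + v₃² + v₊v₋ + 2(s₊s₋ + t₊t₋), C₄ = (u₊u₋+u₃²)v₃² + u₊u₋(s₊s₋+t₊t₋) + u₊²s₋t₋ + u₋²s₊t₊ + 2u₃v₃(s₊s₋−t₊t₋) + ((t₋v₋−s₋v₊)u₊ + (t₊v₊−s₊v₋)u₋)v₃ + ((t₊v₊+s₊v₋)u₋ + (s₋v₊+t₋v₋)u₊)u₃ + v₊v₋s₊s₋ + u₃²v₊v₋ + (s₊s₋−t₊t₋)² − v₊²s₋t₊ − v₋²s₊t₋ + v₊v₋t₊t₋, C₂₁ = u₊u₋ + u₃², C₂₂ = v₃, and C₄' = v₊v₋s₊s₋ + (s₊s₋−t₊t₋)² − v₊²s₋t₊ − v₋²s₊t₋ + v₊v₋t₊t₋. Then the set {C₂, C₄, C₂₁, C₂₂, C₄'} is functionally independent: the 5×10 Jacobian matrix of these five polynomials with respect to the ten variables (u₊,u₋,u₃,v₃,v₊,v₋,s₊,s₋,t₊,t₋) has rank 5 (over the fraction field, equivalently at some point of ℝ¹⁰). -/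
import Mathlib


open MvPolynomial

/-- Dual coordinates `u₊,u₋,u₃,v₃,v₊,v₋,s₊,s₋,t₊,t₋` (variables `0,…,9`) to the seniority
basis `{U₊,U₋,U₃,V₃,V₊,V₋,S₊,S₋,T₊,T₋}` of `so(5)`. -/
noncomputable def up : MvPolynomial (Fin 10) ℝ := X 0
noncomputable def um : MvPolynomial (Fin 10) ℝ := X 1
noncomputable def u3 : MvPolynomial (Fin 10) ℝ := X 2
noncomputable def v3 : MvPolynomial (Fin 10) ℝ := X 3
noncomputable def vp : MvPolynomial (Fin 10) ℝ := X 4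
noncomputable def vm : MvPolynomial (Fin 10) ℝ := X 5
noncomputable def sp : MvPolynomial (Fin 10) ℝ := X 6
noncomputable def sm : MvPolynomial (Fin 10) ℝ := X 7
noncomputable def tp : MvPolynomial (Fin 10) ℝ := X 8
noncomputable def tm : MvPolynomial (Fin 10) ℝ := X 9

/-- `so5Bk i j = Σ_k C_{ij}^k x_k`: the brackets of `so(5)` in the seniority basis
`{U₊,U₋,U₃,V₃,V₊,V₋,S₊,S₋,T₊,T₋}`, written in the dual coordinates.  Nonzero brackets:
`[U±,U₃]=∓U±`, `[U₊,U₋]=2U₃`, `[U±,V±]=∓2S±`, `[U±,V∓]=∓2T±`, `[U±,S∓]=±V∓`,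
`[U±,T∓]=±V±`, `[U₃,S±]=±S±`, `[U₃,T±]=±T±`, `[V₃,S±]=±S±`, `[V₃,T±]=∓T±`,
`[V₊,V₋]=2V₃`, `[V±,V₃]=∓V±`, `[V±,S∓]=∓U∓`, `[V±,T±]=±U±`, `[S₊,S₋]=U₃+V₃`,
`[T₊,T₋]=U₃−V₃`. -/
noncomputable def so5Bk : Fin 10 → Fin 10 → MvPolynomial (Fin 10) ℝ :=
  ![![0, 2 * u3, -up, 0, -2 * sp, -2 * tp, 0, vm, 0, vp],
    ![-2 * u3, 0, um, 0, 2 * tm, 2 * sm, -vp, 0, -vm, 0],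
    ![up, -um, 0, 0, 0, 0, sp, -sm, tp, -tm],
    ![0, 0, 0, 0, vp, -vm, sp, -sm, -tp, tm],
    ![2 * sp, -2 * tm, 0, -vp, 0, 2 * v3, 0, -um, up, 0],
    ![2 * tp, -2 * sm, 0, vm, -2 * v3, 0, up, 0, 0, -um],
    ![0, vp, -sp, -sp, 0, -up, 0, u3 + v3, 0, 0],
    ![-vm, 0, sm, sm, um, 0, -u3 - v3, 0, 0, 0],
    ![0, vm, -tp, tp, -up, 0, 0, 0, 0, u3 - v3],
    ![-vp, 0, tm, -tm, 0, um, 0, 0, -u3 + v3, 0]]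

/-- The brackets of the contraction `g` of `so(5)` along its subalgebra `su(2) × u(1)`
(spanned by `U₊,U₋,U₃,V₃`, indices `0,…,3`): all brackets involving a subalgebra generator
are kept, brackets of two elements of the complement are set to zero. -/
noncomputable def so5ContrBk (i j : Fin 10) : MvPolynomial (Fin 10) ℝ :=
  if i.1 < 4 ∨ j.1 < 4 then so5Bk i j else 0

/-- `F` is an invariant of the Lie algebra with structure constants `C_{ij}^k`
(encoded through `bk i j = Σ_k C_{ij}^k x_k`): for every `i`,
`Σ_{j,k} C_{ij}^k x_k ∂F/∂x_j = Σ_j bk i j ∂F/∂x_j = 0`. -/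
def IsLieInvariant (bk : Fin 10 → Fin 10 → MvPolynomial (Fin 10) ℝ)
    (F : MvPolynomial (Fin 10) ℝ) : Prop :=
  ∀ i : Fin 10, ∑ j : Fin 10, bk i j * pderiv j F = 0

/-- The quartic invariant `C₄'` of the contraction. -/
noncomputable def C₄' : MvPolynomial (Fin 10) ℝ :=
  vp * vm * sp * sm + (sp * sm - tp * tm) ^ 2 - vp ^ 2 * sm * tp - vm ^ 2 * sp * tm
    + vp * vm * tp * tm

/-- The quadratic Casimir invariant of `so(5)` in the seniority basis. -/
noncomputable def C₂ : MvPolynomial (Fin 10) ℝ :=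
  up * um + u3 ^ 2 + v3 ^ 2 + vp * vm + 2 * (sp * sm + tp * tm)

/-- The quartic Casimir invariant of `so(5)` in the seniority basis. -/
noncomputable def C₄ : MvPolynomial (Fin 10) ℝ :=
  (up * um + u3 ^ 2) * v3 ^ 2 + up * um * (sp * sm + tp * tm)
    + up ^ 2 * sm * tm + um ^ 2 * sp * tp + 2 * u3 * v3 * (sp * sm - tp * tm)
    + ((tm * vm - sm * vp) * up + (tp * vp - sp * vm) * um) * v3
    + ((tp * vp + sp * vm) * um + (sm * vp + tm * vm) * up) * u3
    + vp * vm * sp * sm + u3 ^ 2 * vp * vm + (sp * sm - tp * tm) ^ 2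
    - vp ^ 2 * sm * tp - vm ^ 2 * sp * tm + vp * vm * tp * tm

/-- The Casimir invariants of the subalgebra `su(2) × u(1)`. -/
noncomputable def C₂₁ : MvPolynomial (Fin 10) ℝ := up * um + u3 ^ 2
noncomputable def C₂₂ : MvPolynomial (Fin 10) ℝ := v3

/- STATEMENT 13: the set `{C₂, C₄, C₂₁, C₂₂, C₄'}` is functionally independent: the 5×10
Jacobian matrix of these polynomials with respect to the ten variables has rank 5
(equivalently, the matrix of partial derivatives evaluated at some point of `ℝ¹⁰` has
rank 5). -/
/-- The chosen evaluation point `(0,2,0,1,0,1,1,1,2,1)`. -/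
noncomputable def senPt : Fin 10 → ℝ := fun i => [0, 2, 0, 1, 0, 1, 1, 1, 2, 1].getD i.1 0

/-- The Jacobian of `(C₂, C₄, C₂₁, C₂₂, C₄')` at `senPt`, as an explicit matrix. -/
noncomputable def senJac : Matrix (Fin 5) (Fin 10) ℝ := Matrix.of fun i j =>
  ([[2, 0, 0, 2, 1, 0, 2, 2, 2, 4],
    [9, 7, 0, -2, 7, -4, 3, -2, 6, 3],
    [2, 0, 0, 0, 0, 0, 0, 0, 0, 0],
    [0, 0, 0, 1, 0, 0, 0, 0, 0, 0],
    [0, 0, 0, 0, 3, -2, -3, -2, 2, 3]].getD i.1 []).getD j.1 0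

/-- An explicit right inverse of `senJac`. -/
noncomputable def senSel : Matrix (Fin 10) (Fin 5) ℝ := Matrix.of fun i j =>
  ([[0, 0, 1/2, 0, 0],
    [-1/7, 1/7, -1/2, 4/7, -2/7],
    [0, 0, 0, 0, 0],
    [0, 0, 0, 1, 0],
    [1, 0, -1, -2, 0],
    [3/2, 0, -3/2, -3, -1/2],
    [0, 0, 0, 0, 0],
    [0, 0, 0, 0, 0],
    [0, 0, 0, 0, 0],
    [0, 0, 0, 0, 0]].getD i.1 []).getD j.1 0

lemma pderiv_two (i : Fin 10) : pderiv i (2 : MvPolynomial (Fin 10) ℝ) = 0 := by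
  rw [show (2 : MvPolynomial (Fin 10) ℝ) = C 2 from (map_ofNat _ 2).symm, pderiv_C]

lemma sum_univ_ten {β : Type*} [AddCommMonoid β] (f : Fin 10 → β) :
    ∑ i, f i = f 0 + f 1 + f 2 + f 3 + f 4 + f 5 + f 6 + f 7 + f 8 + f 9 := by
  rw [Fin.sum_univ_castSucc, Fin.sum_univ_castSucc, Fin.sum_univ_eight]; rfl

lemma fvA0 : (((0:Fin 10)):ℕ) = 0 := rfl
lemma fvA1 : (((1:Fin 10)):ℕ) = 1 := rfl
lemma fvA2 : (((2:Fin 10)):ℕ) = 2 := rfl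
lemma fvA3 : (((3:Fin 10)):ℕ) = 3 := rfl
lemma fvA4 : (((4:Fin 10)):ℕ) = 4 := rfl
lemma fvA5 : (((5:Fin 10)):ℕ) = 5 := rfl
lemma fvA6 : (((6:Fin 10)):ℕ) = 6 := rfl
lemma fvA7 : (((7:Fin 10)):ℕ) = 7 := rfl
lemma fvA8 : (((8:Fin 10)):ℕ) = 8 := rfl
lemma fvA9 : (((9:Fin 10)):ℕ) = 9 := rfl
lemma fvB0 : (((0:Fin 5)):ℕ) = 0 := rfl
lemma fvB1 : (((1:Fin 5)):ℕ) = 1 := rfl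
lemma fvB2 : (((2:Fin 5)):ℕ) = 2 := rfl
lemma fvB3 : (((3:Fin 5)):ℕ) = 3 := rfl
lemma fvB4 : (((4:Fin 5)):ℕ) = 4 := rfl

set_option maxHeartbeats 2000000 in
lemma senJac_mul_senSel : senJac * senSel = 1 := by
  ext i j
  fin_cases i <;> fin_cases j <;>
    · simp [Matrix.mul_apply, sum_univ_ten, senJac, senSel, Matrix.one_apply, fvA0, fvA1, fvA2, fvA3, fvA4, fvA5, fvA6, fvA7, fvA8, fvA9, fvB0, fvB1, fvB2, fvB3, fvB4]
      try norm_num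

set_option maxHeartbeats 4000000 in
theorem seniority_functional_independence :
    ∃ pt : Fin 10 → ℝ,
      Matrix.rank (Matrix.of fun (a : Fin 5) (b : Fin 10) =>
        eval pt (pderiv b
          ((![C₂, C₄, C₂₁, C₂₂, C₄'] : Fin 5 → MvPolynomial (Fin 10) ℝ) a))) = 5 := by
  refine ⟨senPt, ?_⟩
  have hM : (Matrix.of fun (a : Fin 5) (b : Fin 10) =>
        eval senPt (pderiv b
          ((![C₂, C₄, C₂₁, C₂₂, C₄'] : Fin 5 → MvPolynomial (Fin 10) ℝ) a))) = senJac := by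
    ext a b
    fin_cases a <;> fin_cases b <;>
      · simp [C₂, C₄, C₂₁, C₂₂, C₄', up, um, u3, v3, vp, vm, sp, sm, tp, tm, senPt, senJac,
          pderiv_mul, pderiv_pow, pderiv_X, pderiv_two, Pi.single_apply, fvA0, fvA1, fvA2, fvA3, fvA4, fvA5, fvA6, fvA7, fvA8, fvA9, fvB0, fvB1, fvB2, fvB3, fvB4]
        try norm_num
  rw [hM]
  refine le_antisymm (le_trans senJac.rank_le_card_height (by simp)) ?_
  calc (5 : ℕ) = (senJac * senSel).rank := by
        rw [senJac_mul_senSel, Matrix.rank_one]; simp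
    _ ≤ senJac.rank := Matrix.rank_mul_le_left _ _
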